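/- arXiv:1505.02280 — 7 statements merged into one kernel-verified Lean document; each statement's English description precedes it below -/
import Mathlib

section
/- Let n and r be positive integers and let M be an r×r integer matrix whose determinant is coprime with n. Then there exist r×r integer matrices S and T such that the 5r×r matrix M' obtained by stacking (I_r, S, M, T, I_r) vertically has the property that every r×r submatrix of M' consisting of r consecutive rows has determinant coprime with n. -/
section NumberTheory

lemma isUnit_intCast_zmod_iff (n : ℕ) (D : ℤ) :
    IsUnit ((D : ZMod n)) ↔ Int.gcd D n = 1 := by
  constructor
  · rintro ⟨u, hu⟩
    set E : ℤ := ZMod.cast ((u⁻¹ : (ZMod n)ˣ) : ZMod n) with hE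
    have hv : ((u⁻¹ : (ZMod n)ˣ) : ZMod n) = ((E : ℤ) : ZMod n) :=
      (ZMod.intCast_zmod_cast _).symm
    have h1 : ((D * E - 1 : ℤ) : ZMod n) = 0 := by
      push_cast
      rw [← hv, ← hu]
      simp
    rw [ZMod.intCast_zmod_eq_zero_iff_dvd] at h1
    obtain ⟨k, hk⟩ := h1
    rw [← Int.isCoprime_iff_gcd_eq_one]
    exact ⟨E, -k, by linarith⟩
  · intro h
    rw [← Int.isCoprime_iff_gcd_eq_one] at h
    obtain ⟨u, v, huv⟩ := h
    apply IsUnit.of_mul_eq_one ((u : ZMod n))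
    have := congrArg (fun x : ℤ => (x : ZMod n)) huv
    push_cast at this
    rw [ZMod.natCast_self] at this
    simpa [mul_comm] using this

/-- Stable range 1 trick over ℤ. -/
lemma sr1_int (n : ℕ) (hn : 0 < n) (a b : ℤ)
    (h : ∀ p : ℕ, p.Prime → (p : ℤ) ∣ a → (p : ℤ) ∣ b → ¬ p ∣ n) :
    ∃ t : ℤ, Int.gcd (a + t * b) n = 1 := by
  classical
  set s : Finset ℕ := n.primeFactors.filter (fun p => ¬ (p : ℤ) ∣ a) with hs
  set N : ℕ := s.prod id with hN
  refine ⟨(N : ℤ), ?_⟩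
  set t : ℤ := (N : ℤ) with ht
  by_contra hg
  obtain ⟨p, hp, hpd⟩ := Nat.exists_prime_and_dvd hg
  have hpn : p ∣ n := by have := hpd.trans (Nat.gcd_dvd_right (a + t * b).natAbs (n:ℤ).natAbs); simpa using this
  have hpab : (p : ℤ) ∣ (a + t * b) := by
    have h1 : p ∣ (a + t * b).natAbs := hpd.trans (Nat.gcd_dvd_left _ _)
    exact Int.dvd_natAbs.mp (Int.natCast_dvd_natCast.mpr h1)
  by_cases hpa : (p : ℤ) ∣ a
  · have hpb : ¬ (p : ℤ) ∣ b := fun hb => h p hp hpa hb hpn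
    have hpt : ¬ (p : ℤ) ∣ t := by
      intro hdvd
      have hpN : p ∣ N := Int.natCast_dvd_natCast.mp hdvd
      obtain ⟨q, hq, hq2⟩ := hp.prime.exists_mem_finset_dvd (hpN)
      simp only [hs, Finset.mem_filter, Nat.mem_primeFactors, id] at hq
      have hpq : p = q := (Nat.prime_dvd_prime_iff_eq hp hq.1.1).mp hq2
      exact hq.2 (hpq ▸ hpa)
    have h2 : (p : ℤ) ∣ t * b := by
      have h3 : (p : ℤ) ∣ (a + t * b) - a := dvd_sub hpab hpa
      simpa using h3
    rcases (Nat.prime_iff_prime_int.mp hp).dvd_mul.mp h2 with h' | h'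
    · exact hpt h'
    · exact hpb h'
  · have hpt : (p : ℤ) ∣ t := by
      have : p ∣ N := Finset.dvd_prod_of_mem id
        (Finset.mem_filter.mpr ⟨Nat.mem_primeFactors.mpr ⟨hp, hpn, hn.ne'⟩, hpa⟩)
      exact Int.natCast_dvd_natCast.mpr this
    have h2 : (p : ℤ) ∣ (a + t * b) - t * b := dvd_sub hpab (hpt.mul_right b)
    simp only [add_sub_cancel_right] at h2
    exact hpa h2

end NumberTheory


lemma sr1_zmod (n : ℕ) (hn : 0 < n) (a b : ZMod n)
    (h : ∃ u v : ZMod n, u * a + v * b = 1) :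
    ∃ t : ZMod n, IsUnit (a + t * b) := by
  obtain ⟨u, v, huv⟩ := h
  set A : ℤ := ZMod.cast a with hA
  set B : ℤ := ZMod.cast b with hB
  have hAa : ((A : ℤ) : ZMod n) = a := ZMod.intCast_zmod_cast a
  have hBb : ((B : ℤ) : ZMod n) = b := ZMod.intCast_zmod_cast b
  set U : ℤ := ZMod.cast u with hU
  set V : ℤ := ZMod.cast v with hV
  have key : ∀ p : ℕ, p.Prime → (p : ℤ) ∣ A → (p : ℤ) ∣ B → ¬ p ∣ n := by
    intro p hp hpA hpB hpn
    have h1 : ((U * A + V * B - 1 : ℤ) : ZMod n) = 0 := by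
      push_cast
      rw [hAa, hBb, hU, hV, ZMod.intCast_zmod_cast, ZMod.intCast_zmod_cast, huv]
      ring
    rw [ZMod.intCast_zmod_eq_zero_iff_dvd] at h1
    have hpd : (p : ℤ) ∣ (U * A + V * B - 1) :=
      dvd_trans (Int.natCast_dvd_natCast.mpr hpn) h1
    have : (p : ℤ) ∣ 1 := by
      have h2 : (p : ℤ) ∣ U * A + V * B := dvd_add (hpA.mul_left U) (hpB.mul_left V)
      have := dvd_sub h2 hpd
      simpa using this
    have h3 : (p : ℤ) ≤ 1 := Int.le_of_dvd one_pos this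
    have h4 : 2 ≤ p := hp.two_le
    omega
  obtain ⟨t, ht⟩ := sr1_int n hn A B key
  refine ⟨((t : ℤ) : ZMod n), ?_⟩
  have := (isUnit_intCast_zmod_iff n (A + t * B)).mpr ht
  have heq : (((A + t * B : ℤ)) : ZMod n) = a + ((t : ℤ) : ZMod n) * b := by
    push_cast
    rw [hAa, hBb]
  rwa [heq] at this


variable {R : Type*} [CommRing R]

lemma sum_fin_truncate {r s : ℕ} (h : s ≤ r) (f : Fin r → R)
    (hf : ∀ k : Fin r, s ≤ (k : ℕ) → f k = 0) :
    ∑ k, f k = ∑ k : Fin s, f (Fin.castLE h k) := by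
  classical
  have hm : ((Finset.univ : Finset (Fin s)).map (Fin.castLEEmb h)).sum f
      = ∑ k : Fin s, f (Fin.castLE h k) := by
    rw [Finset.sum_map]
    simp
  rw [← hm]
  refine (Finset.sum_subset (Finset.subset_univ _) ?_).symm
  intro x _ hx
  apply hf
  by_contra hlt
  push_neg at hlt
  exact hx (Finset.mem_map.mpr ⟨⟨(x : ℕ), hlt⟩, Finset.mem_univ _, Fin.ext rfl⟩)

lemma det_tri_up {m : ℕ} (A : Matrix (Fin m) (Fin m) R)
    (h0 : ∀ i j : Fin m, (j : ℕ) < (i : ℕ) → A i j = 0) (h1 : ∀ i, A i i = 1) :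
    A.det = 1 := by
  rw [Matrix.det_of_upperTriangular (fun i j hij => h0 i j hij)]
  simp [h1]

lemma det_tri_lo {m : ℕ} (A : Matrix (Fin m) (Fin m) R)
    (h0 : ∀ i j : Fin m, (i : ℕ) < (j : ℕ) → A i j = 0) (h1 : ∀ i, A i i = 1) :
    A.det = 1 := by
  rw [Matrix.det_of_lowerTriangular A (fun i j hij => h0 i j hij)]
  simp [h1]

lemma lead_block_mul {r s : ℕ} (h : s ≤ r) (L A : Matrix (Fin r) (Fin r) R)
    (hL : ∀ i j : Fin r, (i : ℕ) < (j : ℕ) → L i j = 0) :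
    (L * A).submatrix (Fin.castLE h) (Fin.castLE h) =
      (L.submatrix (Fin.castLE h) (Fin.castLE h)) * (A.submatrix (Fin.castLE h) (Fin.castLE h)) := by
  ext i j
  simp only [Matrix.submatrix_apply, Matrix.mul_apply]
  exact sum_fin_truncate h _ (fun k hk => by
    rw [hL (Fin.castLE h i) k (lt_of_lt_of_le i.isLt hk), zero_mul])

/-- determinant of leading block unchanged by left mult by lower unitriangular -/
lemma det_lead_block_mul {r s : ℕ} (h : s ≤ r) (L A : Matrix (Fin r) (Fin r) R)
    (hL : ∀ i j : Fin r, (i : ℕ) < (j : ℕ) → L i j = 0) (hL1 : ∀ i, L i i = 1) :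
    ((L * A).submatrix (Fin.castLE h) (Fin.castLE h)).det =
      (A.submatrix (Fin.castLE h) (Fin.castLE h)).det := by
  rw [lead_block_mul h L A hL, Matrix.det_mul,
    det_tri_lo (L.submatrix (Fin.castLE h) (Fin.castLE h))
      (fun i j hij => hL _ _ hij) (fun i => hL1 _), one_mul]


lemma LEAD (n : ℕ) (hn : 0 < n) :
    ∀ (r : ℕ) (M : Matrix (Fin r) (Fin r) (ZMod n)), IsUnit M.det →
    ∃ X : Matrix (Fin r) (Fin r) (ZMod n),
      (∀ i j : Fin r, (j : ℕ) < (i : ℕ) → X i j = 0) ∧ (∀ i, X i i = 1) ∧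
      ∀ (s : ℕ) (h : s ≤ r),
        IsUnit ((X * M).submatrix (Fin.castLE h) (Fin.castLE h)).det := by
  intro r
  induction r with
  | zero =>
    intro M _
    refine ⟨1, fun i _ _ => i.elim0, fun i => i.elim0, ?_⟩
    intro s hs
    have hs0 : s = 0 := Nat.le_zero.mp hs
    subst hs0
    simpa using isUnit_one
  | succ r IH =>
    intro M hM
    have hinv : M⁻¹ * M = 1 := Matrix.nonsing_inv_mul M hM
    set a : ZMod n := M 0 0 with ha
    set b : ZMod n := ∑ j : Fin r, M⁻¹ 0 j.succ * M j.succ 0 with hb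
    have hcomb : M⁻¹ 0 0 * a + 1 * b = 1 := by
      have h1 : (M⁻¹ * M) 0 0 = 1 := by rw [hinv]; simp [Matrix.one_apply]
      rw [Matrix.mul_apply, Fin.sum_univ_succ] at h1
      rw [one_mul, ha, hb]
      exact h1
    obtain ⟨t, hu⟩ := sr1_zmod n hn a b ⟨M⁻¹ 0 0, 1, hcomb⟩
    set u : ZMod n := a + t * b with hudef
    set v : ZMod n := ↑(hu.unit⁻¹) with hvdef
    have hvu : v * u = 1 := hu.val_inv_mul
    set X₀ : Matrix (Fin (r+1)) (Fin (r+1)) (ZMod n) :=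
      Matrix.of (fun i j => if i = 0 then (if j = 0 then 1 else t * M⁻¹ 0 j)
        else if i = j then 1 else 0) with hX₀
    set N : Matrix (Fin (r+1)) (Fin (r+1)) (ZMod n) := X₀ * M with hNdef
    have hX₀tri : ∀ i j : Fin (r+1), (j : ℕ) < (i : ℕ) → X₀ i j = 0 := by
      intro i j hij
      have hi0 : i ≠ 0 := by
        intro h; rw [h] at hij; simp at hij
      have hij' : i ≠ j := by
        intro h; rw [h] at hij; omega
      simp [hX₀, hi0, hij']
    have hX₀diag : ∀ i, X₀ i i = 1 := by
      intro i
      by_cases hi : i = 0 <;> simp [hX₀, hi]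
    have hN0 : N 0 0 = u := by
      rw [hNdef, Matrix.mul_apply, Fin.sum_univ_succ]
      have e1 : X₀ 0 0 = (1 : ZMod n) := by simp [hX₀]
      have e2 : ∀ j : Fin r, X₀ 0 j.succ = t * M⁻¹ 0 j.succ := by
        intro j; simp [hX₀, (Fin.succ_ne_zero j)]
      rw [e1, one_mul, hudef, hb, Finset.mul_sum]
      congr 1
      exact Finset.sum_congr rfl (fun j _ => by rw [e2 j]; ring)
    have hNsucc : ∀ (i : Fin r) (j : Fin (r+1)), N i.succ j = M i.succ j := by
      intro i j
      rw [hNdef, Matrix.mul_apply]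
      have e : ∀ k, X₀ i.succ k = if i.succ = k then 1 else 0 := by
        intro k; simp [hX₀, Fin.succ_ne_zero i]
      simp_rw [e]
      simp
    set L : Matrix (Fin (r+1)) (Fin (r+1)) (ZMod n) :=
      Matrix.of (fun i j => if j = 0 then (if i = 0 then 1 else -(N i 0) * v)
        else if i = j then 1 else 0) with hL
    set P : Matrix (Fin (r+1)) (Fin (r+1)) (ZMod n) := L * N with hPdef
    have hLtri : ∀ i j : Fin (r+1), (i : ℕ) < (j : ℕ) → L i j = 0 := by
      intro i j hij
      have hj0 : j ≠ 0 := by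
        intro h; rw [h] at hij; simp at hij
      have hij' : i ≠ j := by
        intro h; rw [h] at hij; omega
      simp [hL, hj0, hij']
    have hLdiag : ∀ i, L i i = 1 := by
      intro i; by_cases hi : i = 0 <;> simp [hL, hi]
    have hP0 : ∀ j, P 0 j = N 0 j := by
      intro j
      rw [hPdef, Matrix.mul_apply]
      have e : ∀ k, L 0 k = if (0 : Fin (r+1)) = k then 1 else 0 := by
        intro k
        by_cases hk : k = 0
        · subst hk; simp [hL]
        · simp [hL, hk, fun h => hk (Eq.symm h)]
      simp_rw [e]
      simp
    have hPsucc : ∀ (i : Fin r) (j : Fin (r+1)),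
        P i.succ j = N i.succ j + L i.succ 0 * N 0 j := by
      intro i j
      rw [hPdef, Matrix.mul_apply, Fin.sum_univ_succ]
      have e : ∀ k : Fin r, L i.succ k.succ = if i = k then 1 else 0 := by
        intro k
        simp [hL, Fin.succ_ne_zero k, Fin.succ_inj]
      simp_rw [e]
      rw [add_comm]
      congr 1
      simp
    have hPs0 : ∀ i : Fin r, P i.succ 0 = 0 := by
      intro i
      rw [hPsucc i 0, hN0]
      have hLi : L i.succ 0 = -(N i.succ 0) * v := by simp [hL, Fin.succ_ne_zero i]
      rw [hLi]
      have e : N i.succ 0 + -N i.succ 0 * v * u = N i.succ 0 - N i.succ 0 * (v * u) := by ring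
      rw [e, hvu, mul_one, sub_self]
    set M₁ : Matrix (Fin r) (Fin r) (ZMod n) :=
      Matrix.of (fun i j => P i.succ j.succ) with hM₁
    have hdetP : P.det = u * M₁.det := by
      rw [Matrix.det_succ_column_zero, Fin.sum_univ_succ]
      have h2 : (∑ i : Fin r, (-1 : ZMod n) ^ ((i.succ : Fin (r+1)) : ℕ) * P i.succ 0 *
          (P.submatrix i.succ.succAbove Fin.succ).det) = 0 :=
        Finset.sum_eq_zero (fun i _ => by rw [hPs0]; ring)
      rw [h2, add_zero, hP0 0, hN0]
      have e : P.submatrix (Fin.succAbove 0) Fin.succ = M₁ := by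
        rw [Fin.succAbove_zero]; rfl
      rw [e]
      simp
    have hdetM₁ : IsUnit M₁.det := by
      have e : P.det = M.det := by
        rw [hPdef, Matrix.det_mul, hNdef, Matrix.det_mul,
          det_tri_lo L hLtri hLdiag, det_tri_up X₀ hX₀tri hX₀diag, one_mul, one_mul]
      rw [e] at hdetP
      exact isUnit_of_mul_isUnit_right (hdetP ▸ hM)
    obtain ⟨X₁, hX₁tri, hX₁diag, hX₁min⟩ := IH M₁ hdetM₁
    set E : Matrix (Fin (r+1)) (Fin (r+1)) (ZMod n) :=
      Matrix.of (fun i j => Fin.cases (Fin.cases (1 : ZMod n) (fun _ => 0) j)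
        (fun i' => Fin.cases 0 (fun j' => X₁ i' j') j) i) with hE
    have hE00 : E 0 0 = 1 := by simp [hE]
    have hE0s : ∀ j : Fin r, E 0 j.succ = 0 := by intro j; simp [hE]
    have hEs0 : ∀ i : Fin r, E i.succ 0 = 0 := by intro i; simp [hE]
    have hEss : ∀ i j : Fin r, E i.succ j.succ = X₁ i j := by intro i j; simp [hE]
    have hXtri : ∀ i j : Fin (r+1), (j : ℕ) < (i : ℕ) → (E * X₀) i j = 0 := by
      intro i j hij
      rw [Matrix.mul_apply]
      apply Finset.sum_eq_zero
      intro k _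
      rcases Fin.eq_zero_or_eq_succ i with rfl | ⟨i', rfl⟩
      · simp at hij
      · rcases Fin.eq_zero_or_eq_succ k with rfl | ⟨k', rfl⟩
        · rw [hEs0, zero_mul]
        · rw [hEss]
          by_cases hk' : (k' : ℕ) < (i' : ℕ)
          · rw [hX₁tri i' k' hk', zero_mul]
          · have h1 : k'.succ ≠ j := by
              intro h
              rw [← h] at hij
              simp [Fin.val_succ] at hij
              omega
            have h2 : X₀ k'.succ j = 0 := by
              simp [hX₀, Fin.succ_ne_zero k', h1]
            rw [h2, mul_zero]
    have hXdiag : ∀ i : Fin (r+1), (E * X₀) i i = 1 := by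
      intro i
      rw [Matrix.mul_apply]
      rcases Fin.eq_zero_or_eq_succ i with rfl | ⟨i', rfl⟩
      · rw [Fin.sum_univ_succ, hE00, one_mul]
        have e : ∀ k : Fin r, E 0 k.succ * X₀ k.succ 0 = 0 := fun k => by
          rw [hE0s, zero_mul]
        simp_rw [e]
        rw [Finset.sum_const_zero, add_zero]
        simp [hX₀]
      · rw [Fin.sum_univ_succ, hEs0, zero_mul, zero_add]
        have e : ∀ k : Fin r, E i'.succ k.succ * X₀ k.succ i'.succ
            = X₁ i' k * (if k = i' then 1 else 0) := by
          intro k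
          rw [hEss]
          congr 1
          simp [hX₀, Fin.succ_ne_zero k, Fin.succ_inj]
        simp_rw [e]
        simp [hX₁diag]
    set L' : Matrix (Fin (r+1)) (Fin (r+1)) (ZMod n) :=
      Matrix.of (fun i j => Fin.cases (Fin.cases (1 : ZMod n) (fun _ => 0) j)
        (fun i' => Fin.cases (∑ k : Fin r, X₁ i' k * L k.succ 0)
          (fun j' => if i' = j' then 1 else 0) j) i) with hL'
    have hL'00 : L' 0 0 = 1 := by simp [hL']
    have hL'0s : ∀ j : Fin r, L' 0 j.succ = 0 := by intro j; simp [hL']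
    have hL's0 : ∀ i : Fin r, L' i.succ 0 = ∑ k : Fin r, X₁ i k * L k.succ 0 := by
      intro i; simp [hL']
    have hL'ss : ∀ i j : Fin r, L' i.succ j.succ = if i = j then 1 else 0 := by
      intro i j; simp [hL']
    have hL'tri : ∀ i j : Fin (r+1), (i : ℕ) < (j : ℕ) → L' i j = 0 := by
      intro i j hij
      rcases Fin.eq_zero_or_eq_succ j with rfl | ⟨j', rfl⟩
      · simp at hij
      · rcases Fin.eq_zero_or_eq_succ i with rfl | ⟨i', rfl⟩
        · rw [hL'0s]
        · rw [hL'ss]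
          have : i' ≠ j' := by
            intro h; rw [h] at hij; omega
          simp [this]
    have hL'diag : ∀ i, L' i i = 1 := by
      intro i
      rcases Fin.eq_zero_or_eq_succ i with rfl | ⟨i', rfl⟩
      · exact hL'00
      · rw [hL'ss]; simp
    have hEN0 : ∀ j, (E * N) 0 j = N 0 j := by
      intro j
      rw [Matrix.mul_apply, Fin.sum_univ_succ, hE00, one_mul]
      have e : ∀ k : Fin r, E 0 k.succ * N k.succ j = 0 := fun k => by rw [hE0s, zero_mul]
      simp_rw [e]
      rw [Finset.sum_const_zero, add_zero]
    have hENs : ∀ (i : Fin r) (j : Fin (r+1)),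
        (E * N) i.succ j = ∑ k : Fin r, X₁ i k * N k.succ j := by
      intro i j
      rw [Matrix.mul_apply, Fin.sum_univ_succ, hEs0, zero_mul, zero_add]
      exact Finset.sum_congr rfl (fun k _ => by rw [hEss])
    set G : Matrix (Fin (r+1)) (Fin (r+1)) (ZMod n) :=
      Matrix.of (fun i j => Fin.cases (Fin.cases u (fun j' => P 0 j'.succ) j)
        (fun i' => Fin.cases 0 (fun j' => (X₁ * M₁) i' j') j) i) with hG
    have hG00 : G 0 0 = u := by simp [hG]
    have hG0s : ∀ j : Fin r, G 0 j.succ = P 0 j.succ := by intro j; simp [hG]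
    have hGs0 : ∀ i : Fin r, G i.succ 0 = 0 := by intro i; simp [hG]
    have hGss : ∀ i j : Fin r, G i.succ j.succ = (X₁ * M₁) i j := by intro i j; simp [hG]
    have hKey : L' * (E * N) = G := by
      ext i j
      rw [Matrix.mul_apply]
      rcases Fin.eq_zero_or_eq_succ i with rfl | ⟨i', rfl⟩
      · rw [Fin.sum_univ_succ, hL'00, one_mul]
        have e : ∀ k : Fin r, L' 0 k.succ * (E * N) k.succ j = 0 := fun k => by
          rw [hL'0s, zero_mul]
        simp_rw [e]
        rw [Finset.sum_const_zero, add_zero, hEN0]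
        rcases Fin.eq_zero_or_eq_succ j with rfl | ⟨j', rfl⟩
        · rw [hG00, hN0]
        · rw [hG0s, hP0]
      · rw [Fin.sum_univ_succ, hL's0, hEN0]
        have e : ∀ k : Fin r, L' i'.succ k.succ * (E * N) k.succ j
            = (if i' = k then (E * N) k.succ j else 0) := fun k => by
          rw [hL'ss, ite_mul, one_mul, zero_mul]
        simp_rw [e]
        rw [Finset.sum_ite_eq, if_pos (Finset.mem_univ i'), hENs]
        have e2 : (∑ k : Fin r, X₁ i' k * L k.succ 0) * N 0 j
            + ∑ k : Fin r, X₁ i' k * N k.succ j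
            = ∑ k : Fin r, X₁ i' k * P k.succ j := by
          rw [Finset.sum_mul, ← Finset.sum_add_distrib]
          exact Finset.sum_congr rfl (fun k _ => by rw [hPsucc]; ring)
        rw [e2]
        rcases Fin.eq_zero_or_eq_succ j with rfl | ⟨j', rfl⟩
        · rw [hGs0]
          exact Finset.sum_eq_zero (fun k _ => by rw [hPs0, mul_zero])
        · rw [hGss, Matrix.mul_apply]
          rfl
    refine ⟨E * X₀, hXtri, hXdiag, ?_⟩
    intro s hs
    have hXM : E * X₀ * M = E * N := by rw [Matrix.mul_assoc, hNdef]
    have hdet1 : ((E * X₀ * M).submatrix (Fin.castLE hs) (Fin.castLE hs)).det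
        = ((L' * (E * X₀ * M)).submatrix (Fin.castLE hs) (Fin.castLE hs)).det :=
      (det_lead_block_mul hs L' _ hL'tri hL'diag).symm
    rw [hdet1, show L' * (E * X₀ * M) = G from by rw [hXM]; exact hKey]
    cases s with
    | zero => simpa using isUnit_one
    | succ s' =>
      have hs' : s' ≤ r := Nat.succ_le_succ_iff.mp hs
      have hcast : ∀ i : Fin s', Fin.castLE hs i.succ = (Fin.castLE hs' i).succ := by
        intro i; apply Fin.ext; simp
      have hcast0 : Fin.castLE hs (0 : Fin (s'+1)) = 0 := rfl
      set Q : Matrix (Fin (s'+1)) (Fin (s'+1)) (ZMod n) :=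
        G.submatrix (Fin.castLE hs) (Fin.castLE hs) with hQ
      have hQ0 : Q 0 0 = u := by
        rw [hQ, Matrix.submatrix_apply, hcast0, hG00]
      have hQs0 : ∀ i : Fin s', Q i.succ 0 = 0 := by
        intro i
        rw [hQ, Matrix.submatrix_apply, hcast0, hcast, hGs0]
      have hQdet : Q.det = u *
          ((X₁ * M₁).submatrix (Fin.castLE hs') (Fin.castLE hs')).det := by
        rw [Matrix.det_succ_column_zero, Fin.sum_univ_succ]
        have h2 : (∑ i : Fin s', (-1 : ZMod n) ^ ((i.succ : Fin (s'+1)) : ℕ) * Q i.succ 0 *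
            (Q.submatrix i.succ.succAbove Fin.succ).det) = 0 :=
          Finset.sum_eq_zero (fun i _ => by rw [hQs0]; ring)
        rw [h2, add_zero, hQ0]
        have e : Q.submatrix (Fin.succAbove 0) Fin.succ
            = (X₁ * M₁).submatrix (Fin.castLE hs') (Fin.castLE hs') := by
          rw [Fin.succAbove_zero]
          ext i j
          rw [Matrix.submatrix_apply, Matrix.submatrix_apply, hQ, Matrix.submatrix_apply,
            hcast, hcast, hGss]
        rw [e]
        simp
      rw [hQdet]
      exact hu.mul (hX₁min s' hs')


/-- rows < s come from B, rows ≥ s come from A -/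
def VMat {R : Type*} [CommRing R] {r : ℕ} (s : ℕ) (A B : Matrix (Fin r) (Fin r) R) :
    Matrix (Fin r) (Fin r) R :=
  Matrix.of fun a b => if (a : ℕ) < s then B a b else A a b

section Rot

variable {R : Type*} [CommRing R] {r : ℕ}

lemma rot_isUnit (hr : 0 < r) (s : ℕ) (hs1 : 0 < s) (hsr : s < r)
    (A B W : Matrix (Fin r) (Fin r) R)
    (hW : ∀ (a : Fin r) (b : Fin r), W a b =
      if h : s + (a : ℕ) < r then A ⟨s + (a : ℕ), h⟩ b
      else B ⟨s + (a : ℕ) - r, by omega⟩ b)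
    (hV : IsUnit (VMat s A B).det) : IsUnit W.det := by
  haveI : NeZero r := ⟨hr.ne'⟩
  set σ : Equiv.Perm (Fin r) := Equiv.addRight (⟨r - s, by omega⟩ : Fin r) with hσ
  have hσa : ∀ a : Fin r, ((σ a : Fin r) : ℕ) = ((a : ℕ) + (r - s)) % r := by
    intro a
    rw [hσ]
    simp [Fin.add_def]
  have hsub : W.submatrix σ id = VMat s A B := by
    ext a b
    rw [Matrix.submatrix_apply, id]
    by_cases h : (a : ℕ) < s
    · have h1 : ((σ a : Fin r) : ℕ) = (a : ℕ) + (r - s) := by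
        rw [hσa, Nat.mod_eq_of_lt (by omega)]
      have hlt : ¬ (s + ((σ a : Fin r) : ℕ) < r) := by omega
      rw [hW (σ a) b, dif_neg hlt]
      have e : s + ((σ a : Fin r) : ℕ) - r = (a : ℕ) := by omega
      simp only [e, Fin.eta]
      simp [VMat, h]
    · have h1 : ((σ a : Fin r) : ℕ) = (a : ℕ) - s := by
        rw [hσa, show (a : ℕ) + (r - s) = ((a : ℕ) - s) + 1 * r by omega,
          Nat.add_mul_mod_self_right, Nat.mod_eq_of_lt (by omega)]
      have hlt : s + ((σ a : Fin r) : ℕ) < r := by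
        have := a.isLt; omega
      rw [hW (σ a) b, dif_pos hlt]
      have e : s + ((σ a : Fin r) : ℕ) = (a : ℕ) := by omega
      simp only [e, Fin.eta]
      simp [VMat, h]
  have hdp := Matrix.det_permute σ W
  rw [hsub] at hdp
  rcases Int.units_eq_one_or (Equiv.Perm.sign σ) with hsg | hsg <;> rw [hsg] at hdp <;>
    simp at hdp
  · rwa [hdp] at hV
  · rw [hdp] at hV
    simpa using hV.neg

lemma vmat_mul (s : ℕ) (A' B' C : Matrix (Fin r) (Fin r) R) :
    VMat s (A' * C) (B' * C) = (VMat s A' B') * C := by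
  ext a b
  rw [Matrix.mul_apply]
  by_cases h : (a : ℕ) < s
  · simp only [VMat, Matrix.of_apply, if_pos h]
    rw [Matrix.mul_apply]
  · simp only [VMat, Matrix.of_apply, if_neg h]
    rw [Matrix.mul_apply]

lemma vmat_up_det (s : ℕ) (X : Matrix (Fin r) (Fin r) R)
    (hXtri : ∀ i j : Fin r, (j : ℕ) < (i : ℕ) → X i j = 0) (hXdiag : ∀ i, X i i = 1) :
    (VMat s X 1).det = 1 := by
  apply det_tri_up
  · intro i j hij
    simp only [VMat, Matrix.of_apply]
    split
    · exact Matrix.one_apply_ne (fun h => by rw [h] at hij; omega)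
    · exact hXtri i j hij
  · intro i
    simp only [VMat, Matrix.of_apply]
    split
    · exact Matrix.one_apply_eq i
    · exact hXdiag i

lemma vmat_lo_det (s : ℕ) (Y : Matrix (Fin r) (Fin r) R)
    (hYtri : ∀ i j : Fin r, (i : ℕ) < (j : ℕ) → Y i j = 0) (hYdiag : ∀ i, Y i i = 1) :
    (VMat s 1 Y).det = 1 := by
  apply det_tri_lo
  · intro i j hij
    simp only [VMat, Matrix.of_apply]
    split
    · exact hYtri i j hij
    · exact Matrix.one_apply_ne (fun h => by rw [h] at hij; omega)
  · intro i
    simp only [VMat, Matrix.of_apply]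
    split
    · exact hYdiag i
    · exact Matrix.one_apply_eq i

lemma corner_lead (s : ℕ) (hs : s ≤ r) (S : Matrix (Fin r) (Fin r) R) :
    (VMat s 1 S).det = (S.submatrix (Fin.castLE hs) (Fin.castLE hs)).det := by
  have hsum : s + (r - s) = r := by omega
  set e : Fin s ⊕ Fin (r - s) ≃ Fin r := finSumFinEquiv.trans (finCongr hsum) with he
  have he1 : ∀ i : Fin s, ((e (Sum.inl i) : Fin r) : ℕ) = (i : ℕ) := by
    intro i; simp [he]
  have he2 : ∀ j : Fin (r - s), ((e (Sum.inr j) : Fin r) : ℕ) = s + (j : ℕ) := by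
    intro j; simp [he]
  rw [← Matrix.det_submatrix_equiv_self e]
  have hblocks : (VMat s 1 S).submatrix e e =
      Matrix.fromBlocks (S.submatrix (Fin.castLE hs) (Fin.castLE hs))
        (Matrix.of fun (i : Fin s) (j : Fin (r - s)) =>
          S (Fin.castLE hs i) (e (Sum.inr j)))
        0 1 := by
    ext i j
    rcases i with i | i <;> rcases j with j | j <;>
      simp only [Matrix.submatrix_apply, Matrix.fromBlocks_apply₁₁,
        Matrix.fromBlocks_apply₁₂, Matrix.fromBlocks_apply₂₁, Matrix.fromBlocks_apply₂₂,
        Matrix.of_apply, VMat]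
    · rw [if_pos (by rw [he1]; exact i.isLt)]
      exact congrArg₂ S (Fin.ext (he1 i)) (Fin.ext (he1 j))
    · rw [if_pos (by rw [he1]; exact i.isLt)]
      exact congrArg₂ S (Fin.ext (he1 i)) rfl
    · rw [if_neg (by rw [he2]; omega)]
      rw [Matrix.one_apply_ne, Matrix.zero_apply]
      intro hc
      have h2 := congrArg Fin.val hc
      rw [he1, he2] at h2
      have := j.isLt
      omega
    · rw [if_neg (by rw [he2]; omega)]
      by_cases hij : i = j
      · subst hij
        rw [Matrix.one_apply_eq, Matrix.one_apply_eq]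
      · rw [Matrix.one_apply_ne (fun hc => hij (Sum.inr_injective (e.injective hc))),
          Matrix.one_apply_ne hij]
  rw [hblocks, Matrix.det_fromBlocks_zero₂₁, Matrix.det_one, mul_one]

lemma corner_trail (s : ℕ) (hs : s ≤ r) (T : Matrix (Fin r) (Fin r) R) :
    (VMat s T 1).det =
      (T.submatrix (fun j : Fin (r - s) => (⟨s + (j : ℕ), by omega⟩ : Fin r))
        (fun j : Fin (r - s) => (⟨s + (j : ℕ), by omega⟩ : Fin r))).det := by
  have hsum : s + (r - s) = r := by omega
  set e : Fin s ⊕ Fin (r - s) ≃ Fin r := finSumFinEquiv.trans (finCongr hsum) with he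
  have he1 : ∀ i : Fin s, ((e (Sum.inl i) : Fin r) : ℕ) = (i : ℕ) := by
    intro i; simp [he]
  have he2 : ∀ j : Fin (r - s), ((e (Sum.inr j) : Fin r) : ℕ) = s + (j : ℕ) := by
    intro j; simp [he]
  rw [← Matrix.det_submatrix_equiv_self e]
  have hblocks : (VMat s T 1).submatrix e e =
      Matrix.fromBlocks 1 0
        (Matrix.of fun (i : Fin (r - s)) (j : Fin s) =>
          T (⟨s + (i : ℕ), by omega⟩ : Fin r) (e (Sum.inl j)))
        (T.submatrix (fun j : Fin (r - s) => (⟨s + (j : ℕ), by omega⟩ : Fin r))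
          (fun j : Fin (r - s) => (⟨s + (j : ℕ), by omega⟩ : Fin r))) := by
    ext i j
    rcases i with i | i <;> rcases j with j | j <;>
      simp only [Matrix.submatrix_apply, Matrix.fromBlocks_apply₁₁,
        Matrix.fromBlocks_apply₁₂, Matrix.fromBlocks_apply₂₁, Matrix.fromBlocks_apply₂₂,
        Matrix.of_apply, VMat]
    · rw [if_pos (by rw [he1]; exact i.isLt)]
      by_cases hij : i = j
      · subst hij
        rw [Matrix.one_apply_eq, Matrix.one_apply_eq]
      · rw [Matrix.one_apply_ne (fun hc => hij (Sum.inl_injective (e.injective hc))),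
          Matrix.one_apply_ne hij]
    · rw [if_pos (by rw [he1]; exact i.isLt)]
      rw [Matrix.one_apply_ne, Matrix.zero_apply]
      intro hc
      have h2 := congrArg Fin.val hc
      rw [he1, he2] at h2
      have := i.isLt
      omega
    · rw [if_neg (by rw [he2]; omega)]
      exact congrArg₂ T (Fin.ext (he2 i)) rfl
    · rw [if_neg (by rw [he2]; omega)]
      exact congrArg₂ T (Fin.ext (he2 i)) (Fin.ext (he2 j))
  rw [hblocks, Matrix.det_fromBlocks_zero₁₂, Matrix.det_one, one_mul]

end Rot


lemma trail_minors (n : ℕ) (hn : 0 < n) (r : ℕ)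
    (Mz : Matrix (Fin r) (Fin r) (ZMod n)) (hMz : IsUnit Mz.det) :
    ∃ Y : Matrix (Fin r) (Fin r) (ZMod n),
      (∀ i j : Fin r, (i : ℕ) < (j : ℕ) → Y i j = 0) ∧ (∀ i, Y i i = 1) ∧
      ∀ (s : ℕ) (hs : s ≤ r), IsUnit (((Y * Mz).submatrix
        (fun j : Fin (r - s) => (⟨s + (j : ℕ), by omega⟩ : Fin r))
        (fun j : Fin (r - s) => (⟨s + (j : ℕ), by omega⟩ : Fin r))).det) := by
  set Mzr : Matrix (Fin r) (Fin r) (ZMod n) := Mz.submatrix ⇑Fin.revPerm ⇑Fin.revPerm with hMzrd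
  have hMzr : IsUnit Mzr.det := by
    rw [hMzrd, Matrix.det_submatrix_equiv_self]
    exact hMz
  obtain ⟨Xr, hXrtri, hXrdiag, hXrmin⟩ := LEAD n hn r Mzr hMzr
  set Y : Matrix (Fin r) (Fin r) (ZMod n) := Xr.submatrix ⇑Fin.revPerm ⇑Fin.revPerm with hYd
  have hYtri : ∀ i j : Fin r, (i : ℕ) < (j : ℕ) → Y i j = 0 := by
    intro i j hij
    apply hXrtri
    simp only [Fin.revPerm_apply, Fin.val_rev]
    omega
  have hYdiag : ∀ i, Y i i = 1 := fun i => hXrdiag _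
  have hfact : Y * Mz = (Xr * Mzr).submatrix ⇑Fin.revPerm ⇑Fin.revPerm := by
    ext i j
    rw [Matrix.submatrix_apply, Matrix.mul_apply, Matrix.mul_apply]
    apply Fintype.sum_equiv Fin.revPerm
    intro k
    rw [hYd, hMzrd]
    simp only [Matrix.submatrix_apply, Fin.revPerm_apply, Fin.rev_rev]
  refine ⟨Y, hYtri, hYdiag, ?_⟩
  intro s hs
  have h' : r - s ≤ r := Nat.sub_le r s
  have hsub : ((Y * Mz).submatrix
        (fun j : Fin (r - s) => (⟨s + (j : ℕ), by omega⟩ : Fin r))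
        (fun j : Fin (r - s) => (⟨s + (j : ℕ), by omega⟩ : Fin r)))
      = ((Xr * Mzr).submatrix (Fin.castLE h') (Fin.castLE h')).submatrix
        ⇑Fin.revPerm ⇑Fin.revPerm := by
    ext i j
    rw [Matrix.submatrix_apply, Matrix.submatrix_apply, Matrix.submatrix_apply, hfact,
      Matrix.submatrix_apply]
    refine congrArg₂ (Xr * Mzr) (Fin.ext ?_) (Fin.ext ?_)
    · have := i.isLt
      simp only [Fin.revPerm_apply, Fin.val_rev, Fin.coe_castLE]
      omega
    · have := j.isLt
      simp only [Fin.revPerm_apply, Fin.val_rev, Fin.coe_castLE]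
      omega
  rw [hsub, Matrix.det_submatrix_equiv_self]
  exact hXrmin (r - s) h'


theorem stacked_matrix_consecutive_rows_coprime
    (n r : ℕ) (hn : 0 < n) (hr : 0 < r)
    (M : Matrix (Fin r) (Fin r) ℤ) (hM : Int.gcd M.det n = 1) :
    ∃ S T : Matrix (Fin r) (Fin r) ℤ, ∃ M' : Matrix (Fin (5 * r)) (Fin r) ℤ,
      (∀ a b : Fin r,
          M' ⟨a.val, by have := a.isLt; omega⟩ b = (if a = b then 1 else 0) ∧
          M' ⟨r + a.val, by have := a.isLt; omega⟩ b = S a b ∧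
          M' ⟨2 * r + a.val, by have := a.isLt; omega⟩ b = M a b ∧
          M' ⟨3 * r + a.val, by have := a.isLt; omega⟩ b = T a b ∧
          M' ⟨4 * r + a.val, by have := a.isLt; omega⟩ b = (if a = b then 1 else 0)) ∧
      (∀ (i : ℕ) (hi : i + r ≤ 5 * r),
        Int.gcd
          (Matrix.det (Matrix.of fun a b : Fin r =>
            M' ⟨i + a.val, by have := a.isLt; omega⟩ b)) n = 1) := by
  classical
  set c : ℤ → ZMod n := fun x => (x : ZMod n) with hc
  set Mz : Matrix (Fin r) (Fin r) (ZMod n) := M.map c with hMzd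
  have hcast : ∀ (B : Matrix (Fin r) (Fin r) ℤ), ((B.det : ℤ) : ZMod n) = (B.map c).det := by
    intro B
    rw [show ((B.det : ℤ) : ZMod n) = (Int.castRingHom (ZMod n)) B.det from rfl,
      RingHom.map_det]
    rfl
  have hMz : IsUnit Mz.det := by
    rw [hMzd, ← hcast]
    exact (isUnit_intCast_zmod_iff n M.det).mpr hM
  obtain ⟨X, hXtri, hXdiag, hXmin⟩ := LEAD n hn r Mz hMz
  obtain ⟨Y, hYtri, hYdiag, hTmin⟩ := trail_minors n hn r Mz hMz
  set SR : Matrix (Fin r) (Fin r) (ZMod n) := X * Mz with hSRd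
  set TR : Matrix (Fin r) (Fin r) (ZMod n) := Y * Mz with hTRd
  set S : Matrix (Fin r) (Fin r) ℤ := Matrix.of fun i j => (ZMod.cast (SR i j) : ℤ) with hSd
  set T : Matrix (Fin r) (Fin r) ℤ := Matrix.of fun i j => (ZMod.cast (TR i j) : ℤ) with hTd
  have hSmap : S.map c = SR := by
    ext i j
    rw [Matrix.map_apply, hSd]
    exact ZMod.intCast_zmod_cast _
  have hTmap : T.map c = TR := by
    ext i j
    rw [Matrix.map_apply, hTd]
    exact ZMod.intCast_zmod_cast _
  set blk : ℕ → Matrix (Fin r) (Fin r) ℤ := fun q =>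
    if q = 0 then 1 else if q = 1 then S else if q = 2 then M else if q = 3 then T else 1
    with hblkd
  set M' : Matrix (Fin (5 * r)) (Fin r) ℤ :=
    Matrix.of fun idx b => blk ((idx : ℕ) / r) ⟨(idx : ℕ) % r, Nat.mod_lt _ hr⟩ b with hM'd
  have hdiv : ∀ q c0 : ℕ, c0 < r → (q * r + c0) / r = q ∧ (q * r + c0) % r = c0 := by
    intro q c0 hc0
    constructor
    · rw [Nat.add_comm, Nat.add_mul_div_right _ _ hr, Nat.div_eq_of_lt hc0, Nat.zero_add]
    · rw [Nat.add_comm, Nat.add_mul_mod_self_right, Nat.mod_eq_of_lt hc0]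
  have key : ∀ (q : ℕ) (idx : Fin (5 * r)) (a : Fin r), (idx : ℕ) = q * r + (a : ℕ) →
      ∀ b, M' idx b = blk q a b := by
    intro q idx a hidx b
    show blk ((idx : ℕ) / r) ⟨(idx : ℕ) % r, Nat.mod_lt _ hr⟩ b = blk q a b
    obtain ⟨hd, hm⟩ := hdiv q (a : ℕ) a.isLt
    simp only [hidx, hd, hm, Fin.eta]
  have hblk0 : blk 0 = 1 := by rw [hblkd]; norm_num
  have hblk1 : blk 1 = S := by rw [hblkd]; norm_num
  have hblk2 : blk 2 = M := by rw [hblkd]; norm_num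
  have hblk3 : blk 3 = T := by rw [hblkd]; norm_num
  have hblk4 : blk 4 = 1 := by rw [hblkd]; norm_num
  set blkz : ℕ → Matrix (Fin r) (Fin r) (ZMod n) := fun q => (blk q).map c with hblkzd
  have hz0 : blkz 0 = 1 := by
    rw [hblkzd]; simp only [hblk0]
    exact Matrix.map_one c (by simp [hc]) (by simp [hc])
  have hz1 : blkz 1 = SR := by rw [hblkzd]; simp only [hblk1]; exact hSmap
  have hz2 : blkz 2 = Mz := by rw [hblkzd]; simp only [hblk2]; rfl
  have hz3 : blkz 3 = TR := by rw [hblkzd]; simp only [hblk3]; exact hTmap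
  have hz4 : blkz 4 = 1 := by
    rw [hblkzd]; simp only [hblk4]
    exact Matrix.map_one c (by simp [hc]) (by simp [hc])
  have hdetSR : IsUnit SR.det := by
    rw [hSRd, Matrix.det_mul, det_tri_up X hXtri hXdiag, one_mul]
    exact hMz
  have hdetTR : IsUnit TR.det := by
    rw [hTRd, Matrix.det_mul, det_tri_lo Y hYtri hYdiag, one_mul]
    exact hMz
  refine ⟨S, T, M', ?_, ?_⟩
  · intro a b
    refine ⟨?_, ?_, ?_, ?_, ?_⟩
    · rw [key 0 _ a (by show (a : ℕ) = 0 * r + (a : ℕ); omega) b, hblk0, Matrix.one_apply]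
    · rw [key 1 _ a (by show r + (a : ℕ) = 1 * r + (a : ℕ); omega) b, hblk1]
    · rw [key 2 _ a (by show 2 * r + (a : ℕ) = 2 * r + (a : ℕ); omega) b, hblk2]
    · rw [key 3 _ a (by show 3 * r + (a : ℕ) = 3 * r + (a : ℕ); omega) b, hblk3]
    · rw [key 4 _ a (by show 4 * r + (a : ℕ) = 4 * r + (a : ℕ); omega) b, hblk4, Matrix.one_apply]
  · intro i hi
    rw [← isUnit_intCast_zmod_iff n, hcast]
    obtain ⟨q, s, hqs, hslt⟩ : ∃ q s, i = q * r + s ∧ s < r :=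
      ⟨i / r, i % r, by rw [Nat.mul_comm]; exact (Nat.div_add_mod i r).symm, Nat.mod_lt _ hr⟩
    have hq5 : q < 5 := by
      by_contra hq
      push_neg at hq
      have h5 : 5 * r ≤ q * r := Nat.mul_le_mul_right r hq
      omega
    have hWent : ∀ (a : Fin r) (b : Fin r),
        ((Matrix.of fun (a : Fin r) (b : Fin r) =>
            M' ⟨i + (a : ℕ), by have := a.isLt; omega⟩ b).map c) a b =
        if h : s + (a : ℕ) < r then blkz q ⟨s + (a : ℕ), h⟩ b
        else blkz (q + 1) ⟨s + (a : ℕ) - r, by omega⟩ b := by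
      intro a b
      show c (M' ⟨i + (a : ℕ), by have := a.isLt; omega⟩ b) = _
      by_cases h : s + (a : ℕ) < r
      · have hval : i + (a : ℕ) = q * r + (s + (a : ℕ)) := by omega
        obtain ⟨hd, hm⟩ := hdiv q (s + (a : ℕ)) h
        rw [dif_pos h]
        show c (blk ((i + (a : ℕ)) / r) ⟨(i + (a : ℕ)) % r, Nat.mod_lt _ hr⟩ b) = _
        simp only [hval, hd, hm]
        rfl
      · have hq1 : (q + 1) * r = q * r + r := by ring
        have hval : i + (a : ℕ) = (q + 1) * r + (s + (a : ℕ) - r) := by omega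
        obtain ⟨hd, hm⟩ := hdiv (q + 1) (s + (a : ℕ) - r) (by have := a.isLt; omega)
        rw [dif_neg h]
        show c (blk ((i + (a : ℕ)) / r) ⟨(i + (a : ℕ)) % r, Nat.mod_lt _ hr⟩ b) = _
        simp only [hval, hd, hm]
        rfl
    rcases Nat.eq_zero_or_pos s with hs0 | hs1
    · have hWeq : ((Matrix.of fun (a : Fin r) (b : Fin r) =>
          M' ⟨i + (a : ℕ), by have := a.isLt; omega⟩ b).map c) = blkz q := by
        ext a b
        rw [hWent a b, dif_pos (by omega)]
        simp only [hs0, Nat.zero_add, Fin.eta]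
      rw [hWeq]
      interval_cases q
      · rw [hz0, Matrix.det_one]; exact isUnit_one
      · rw [hz1]; exact hdetSR
      · rw [hz2]; exact hMz
      · rw [hz3]; exact hdetTR
      · rw [hz4, Matrix.det_one]; exact isUnit_one
    · have hq4 : q < 4 := by
        by_contra hq
        push_neg at hq
        have h4 : 4 * r ≤ q * r := Nat.mul_le_mul_right r hq
        omega
      have hV : IsUnit (VMat s (blkz q) (blkz (q + 1))).det := by
        interval_cases q
        · rw [hz0, show (0 + 1 : ℕ) = 1 from rfl, hz1, corner_lead s hslt.le SR]
          exact hXmin s hslt.le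
        · rw [hz1, show (1 + 1 : ℕ) = 2 from rfl, hz2]
          have h1 : VMat s SR Mz = (VMat s X 1) * Mz := by
            rw [← vmat_mul, one_mul]
          rw [h1, Matrix.det_mul, vmat_up_det s X hXtri hXdiag, one_mul]
          exact hMz
        · rw [hz2, show (2 + 1 : ℕ) = 3 from rfl, hz3]
          have h1 : VMat s Mz TR = (VMat s 1 Y) * Mz := by
            rw [← vmat_mul, one_mul]
          rw [h1, Matrix.det_mul, vmat_lo_det s Y hYtri hYdiag, one_mul]
          exact hMz
        · rw [hz3, show (3 + 1 : ℕ) = 4 from rfl, hz4, corner_trail s hslt.le TR]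
          exact hTmin s hslt.le
      exact rot_isUnit hr s hs1 hslt (blkz q) (blkz (q + 1)) _ hWent hV
end

section
/- Let A be a k×m integer matrix with m ≥ k, and let d_1, ..., d_k be the diagonal entries of the Smith normal form of A. Then there exists an integer matrix A' which is obtained from A by left multiplication by a unimodular integer matrix (i.e., row-equivalent to A over ℤ) such that for each j, the greatest common divisor of the entries of the j-th row of A' equals d_j. -/
lemma row_gcd_of_unit_det {n : ℕ} (W : Matrix (Fin n) (Fin n) ℤ)
    (hW : IsUnit W.det) (r : Fin n) :
    Finset.univ.gcd (fun i : Fin n => W r i) = 1 := by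
  set g : ℤ := Finset.univ.gcd (fun i : Fin n => W r i) with hg
  have hdvd : ∀ i : Fin n, g ∣ W r i := fun i =>
    Finset.gcd_dvd (Finset.mem_univ i)
  by_cases h0 : g = 0
  · -- then the row is zero, det is zero, contradiction
    have hz : ∀ i, W r i = 0 := by
      intro i
      have := hdvd i
      rw [h0] at this
      exact zero_dvd_iff.mp this
    have : W.det = 0 := Matrix.det_eq_zero_of_row_eq_zero r hz
    rw [this] at hW
    exact absurd hW (by simp)
  · have hgd : g ∣ W.det := by
      have hrow : W = W.updateRow r (g • fun i => W r i / g) := by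
        ext i j
        by_cases hi : i = r
        · subst hi
          simp [Matrix.updateRow_self, Int.mul_ediv_cancel' (hdvd j)]
        · simp [Matrix.updateRow_ne hi]
      have := Matrix.det_updateRow_smul W r g (fun i => W r i / g)
      rw [← hrow] at this
      exact ⟨_, this⟩
    have hunit : IsUnit g := isUnit_of_dvd_unit hgd hW
    have := Finset.normalize_gcd (s := (Finset.univ : Finset (Fin n)))
      (f := fun i : Fin n => W r i)
    rw [← hg] at this
    rw [← this]
    exact normalize_eq_one.mpr hunit

theorem row_gcds_match_smith_diagonal
    (k m : ℕ) (hkm : k ≤ m) (A : Matrix (Fin k) (Fin m) ℤ)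
    (d : Fin k → ℤ)
    -- `d` is the diagonal of the Smith normal form of `A`:
    (U : Matrix (Fin k) (Fin k) ℤ) (V : Matrix (Fin m) (Fin m) ℤ)
    (hU : IsUnit U.det) (hV : IsUnit V.det)
    (hd0 : ∀ i, 0 ≤ d i)
    (hdvd : ∀ i j : Fin k, i ≤ j → d i ∣ d j)
    (hSNF : U * A * V = Matrix.of fun (i : Fin k) (j : Fin m) =>
      if (j : ℕ) = (i : ℕ) then d i else 0) :
    ∃ U' : Matrix (Fin k) (Fin k) ℤ, IsUnit U'.det ∧
      ∀ j : Fin k, Finset.univ.gcd (fun i : Fin m => (U' * A) j i) = d j := by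
  refine ⟨U, hU, fun j => ?_⟩
  set W : Matrix (Fin m) (Fin m) ℤ := V⁻¹ with hWdef
  have hVW : V * W = 1 := Matrix.mul_nonsing_inv V hV
  have hUA : U * A = (U * A * V) * W := by
    rw [Matrix.mul_assoc, hVW, Matrix.mul_one]
  set c : Fin m := Fin.castLE hkm j with hc
  have hentry : ∀ i : Fin m, (U * A) j i = d j * W c i := by
    intro i
    rw [hUA, hSNF]
    simp only [Matrix.mul_apply, Matrix.of_apply]
    rw [Finset.sum_eq_single c]
    · simp [hc]
    · intro b _ hb
      have : (b : ℕ) ≠ (j : ℕ) := by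
        intro h
        apply hb
        apply Fin.ext
        simp [hc, h]
      simp [this]
    · intro h; exact absurd (Finset.mem_univ c) h
  have hWunit : IsUnit W.det := by
    apply IsUnit.of_mul_eq_one V.det
    rw [← Matrix.det_mul, Matrix.nonsing_inv_mul V hV, Matrix.det_one]
  have hfun : (fun i : Fin m => (U * A) j i) = fun i => d j * W c i :=
    funext hentry
  rw [hfun, Finset.gcd_mul_left, row_gcd_of_unit_det W hWunit c,
    Int.normalize_of_nonneg (hd0 j), mul_one]
end

section
/- Let A be a k×m integer matrix with m ≥ k whose Smith normal form has nonzero diagonal entries d_1, ..., d_k. Let A' be a row reduction of A (A' = U⁻¹A for unimodular U) in which the gcd of the j-th row equals d_j, and let A'' be obtained from A' by dividing the j-th row by d_j for each j. Then the k-th determinantal divisor of A'' equals 1. -/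
/-- The `k`-th determinantal divisor of a `k × m` integer matrix: the gcd of the
determinants of all `k × k` submatrices obtained by choosing `k` columns. -/
def detDivisor (k m : ℕ) (A : Matrix (Fin k) (Fin m) ℤ) : ℤ :=
  Finset.univ.gcd fun f : Fin k → Fin m => (A.submatrix id f).det

open Matrix Finset

lemma det_mul_expand {k m : ℕ} {R : Type*} [CommRing R]
    (M : Matrix (Fin k) (Fin m) R) (N : Matrix (Fin m) (Fin k) R) :
    (M * N).det = ∑ g : Fin k → Fin m, (∏ i, M i (g i)) * (N.submatrix g id).det := by
  have h : (fun i => (M * N) i) = fun i => ∑ l, M i l • N l := by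
    funext i; funext j
    simp [Matrix.mul_apply, Finset.sum_apply]
  have : (M * N).det = (Matrix.detRowAlternating (R := R)).toMultilinearMap
      (fun i => ∑ l, M i l • N l) := by
    rw [← h]; rfl
  rw [this, MultilinearMap.map_sum]
  refine Finset.sum_congr rfl fun g _ => ?_
  rw [MultilinearMap.map_smul_univ]
  rfl

lemma detDivisor_dvd_det_mul {k m : ℕ} (B : Matrix (Fin k) (Fin m) ℤ)
    (C : Matrix (Fin m) (Fin k) ℤ) :
    detDivisor k m B ∣ (B * C).det := by
  have h : (B * C).det = (Cᵀ * Bᵀ).det := by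
    rw [← Matrix.det_transpose (B * C), Matrix.transpose_mul]
  rw [h, det_mul_expand]
  refine Finset.dvd_sum fun g _ => Dvd.dvd.mul_left ?_ _
  have : (Bᵀ.submatrix g id).det = (B.submatrix id g).det := by
    rw [← Matrix.det_transpose (B.submatrix id g), Matrix.transpose_submatrix]
  rw [this]
  exact Finset.gcd_dvd (Finset.mem_univ g)

lemma detDivisor_nonneg {k m : ℕ} (B : Matrix (Fin k) (Fin m) ℤ) :
    0 ≤ detDivisor k m B := by
  exact Int.nonneg_of_normalize_eq_self (Finset.normalize_gcd)

lemma detDivisor_mul_right {k m : ℕ} (B : Matrix (Fin k) (Fin m) ℤ)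
    (W : Matrix (Fin m) (Fin m) ℤ) (hW : IsUnit W.det) :
    detDivisor k m (B * W) = detDivisor k m B := by
  have key : ∀ (P : Matrix (Fin k) (Fin m) ℤ) (Q : Matrix (Fin m) (Fin m) ℤ),
      detDivisor k m P ∣ detDivisor k m (P * Q) := by
    intro P Q
    refine Finset.dvd_gcd fun f _ => ?_
    have : (P * Q).submatrix id f = P * (Q.submatrix id f) := by
      ext i j; simp [Matrix.mul_apply, Matrix.submatrix_apply]
    rw [this]
    exact detDivisor_dvd_det_mul P _
  refine Int.dvd_antisymm (detDivisor_nonneg _) (detDivisor_nonneg _) ?_ (key B W)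
  have hB : B * W * W⁻¹ = B := by
    rw [Matrix.mul_assoc, Matrix.mul_nonsing_inv _ hW, Matrix.mul_one]
  have := key (B * W) W⁻¹
  rwa [hB] at this

lemma detDivisor_mul_left {k m : ℕ} (B : Matrix (Fin k) (Fin m) ℤ)
    (U : Matrix (Fin k) (Fin k) ℤ) (hU : IsUnit U.det) :
    detDivisor k m (U * B) = detDivisor k m B := by
  unfold detDivisor
  have h : ∀ f : Fin k → Fin m, ((U * B).submatrix id f).det
      = U.det * (B.submatrix id f).det := by
    intro f
    have : (U * B).submatrix id f = U * (B.submatrix id f) := by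
      ext i j; simp [Matrix.mul_apply, Matrix.submatrix_apply]
    rw [this, Matrix.det_mul]
  simp only [h]
  rw [Finset.gcd_mul_left, normalize_eq_one.mpr hU, one_mul]

lemma detDivisor_padded {k m : ℕ} (hkm : k ≤ m) (d : Fin k → ℤ) (hd0 : ∀ i, 0 ≤ d i) :
    detDivisor k m (Matrix.of fun (i : Fin k) (j : Fin m) =>
      if (j : ℕ) = (i : ℕ) then d i else 0) = ∏ i, d i := by
  set D0 : Matrix (Fin k) (Fin m) ℤ := Matrix.of fun (i : Fin k) (j : Fin m) =>
      if (j : ℕ) = (i : ℕ) then d i else 0 with hD0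
  refine Int.dvd_antisymm (detDivisor_nonneg _)
    (Finset.prod_nonneg fun i _ => hd0 i) ?_ ?_
  · have hsub : (D0.submatrix id fun j : Fin k => Fin.castLE hkm j) = Matrix.diagonal d := by
      ext i j
      simp only [Matrix.submatrix_apply, id, hD0, Matrix.of_apply, Matrix.diagonal,
        Fin.coe_castLE]
      by_cases h : i = j
      · simp [h]
      · rw [if_neg, if_neg h]
        exact fun hc => h (Fin.ext hc.symm)
    have hmem := Finset.gcd_dvd (f := fun f : Fin k → Fin m => (D0.submatrix id f).det)
      (Finset.mem_univ (fun j : Fin k => Fin.castLE hkm j))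
    simpa [detDivisor, hsub] using hmem
  · refine Finset.dvd_gcd fun f _ => ?_
    rw [Matrix.det_apply']
    refine Finset.dvd_sum fun σ _ => Dvd.dvd.mul_left ?_ _
    have hterm : ∀ i : Fin k, (D0.submatrix id f) (σ i) i
        = if ((f i : ℕ)) = ((σ i : ℕ)) then d (σ i) else 0 := fun i => rfl
    simp only [hterm]
    by_cases h : ∀ i, ((f i : ℕ)) = ((σ i : ℕ))
    · have : ∏ i, (if ((f i : ℕ)) = ((σ i : ℕ)) then d (σ i) else 0) = ∏ i, d (σ i) :=
        Finset.prod_congr rfl fun i _ => if_pos (h i)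
      rw [this, Equiv.prod_comp σ d]
    · push_neg at h
      obtain ⟨i, hi⟩ := h
      have hz : (∏ j, (if ((f j : ℕ)) = ((σ j : ℕ)) then d (σ j) else 0)) = 0 :=
        Finset.prod_eq_zero (Finset.mem_univ i) (if_neg hi)
      rw [hz]
      exact dvd_zero _

theorem divided_row_reduction_has_determinantal_one
    (k m : ℕ) (hkm : k ≤ m) (A : Matrix (Fin k) (Fin m) ℤ)
    (d : Fin k → ℤ)
    -- `d` is the diagonal of the Smith normal form of `A`, with nonzero entries:
    (U₀ : Matrix (Fin k) (Fin k) ℤ) (V₀ : Matrix (Fin m) (Fin m) ℤ)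
    (hU₀ : IsUnit U₀.det) (hV₀ : IsUnit V₀.det)
    (hd0 : ∀ i, 0 ≤ d i) (hdne : ∀ i, d i ≠ 0)
    (hdvd : ∀ i j : Fin k, i ≤ j → d i ∣ d j)
    (hSNF : U₀ * A * V₀ = Matrix.of fun (i : Fin k) (j : Fin m) =>
      if (j : ℕ) = (i : ℕ) then d i else 0)
    -- `A'` is a row reduction of `A` whose `j`-th row has gcd `d j`:
    (U : Matrix (Fin k) (Fin k) ℤ) (hU : IsUnit U.det)
    (A' : Matrix (Fin k) (Fin m) ℤ) (hA' : A' = U * A)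
    (hrow : ∀ j : Fin k, Finset.univ.gcd (fun i : Fin m => A' j i) = d j)
    -- `A''` is obtained from `A'` by dividing the `j`-th row by `d j`:
    (A'' : Matrix (Fin k) (Fin m) ℤ)
    (hA'' : ∀ (j : Fin k) (i : Fin m), A' j i = d j * A'' j i) :
    detDivisor k m A'' = 1 := by
  set D0 : Matrix (Fin k) (Fin m) ℤ := Matrix.of fun (i : Fin k) (j : Fin m) =>
      if (j : ℕ) = (i : ℕ) then d i else 0 with hD0
  -- U₀ * A = D0 * V₀⁻¹
  have h1 : U₀ * A = D0 * V₀⁻¹ := by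
    have := congrArg (fun M => M * V₀⁻¹) hSNF
    simpa [Matrix.mul_assoc, Matrix.mul_nonsing_inv _ hV₀] using this
  -- detDivisor A = ∏ d
  have hDA : detDivisor k m A = ∏ i, d i := by
    calc detDivisor k m A = detDivisor k m (U₀ * A) := (detDivisor_mul_left A U₀ hU₀).symm
      _ = detDivisor k m (D0 * V₀⁻¹) := by rw [h1]
      _ = detDivisor k m D0 :=
        detDivisor_mul_right D0 V₀⁻¹ (Matrix.isUnit_nonsing_inv_det V₀ hV₀)
      _ = ∏ i, d i := detDivisor_padded hkm d hd0
  -- detDivisor A' = (∏ d) * detDivisor A''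
  have hfac : detDivisor k m A' = (∏ i, d i) * detDivisor k m A'' := by
    unfold detDivisor
    have hsub : ∀ f : Fin k → Fin m,
        (A'.submatrix id f).det = (∏ i, d i) * (A''.submatrix id f).det := by
      intro f
      have : A'.submatrix id f = Matrix.diagonal d * (A''.submatrix id f) := by
        ext i j
        simp [Matrix.mul_apply, Matrix.diagonal, hA'' i (f j)]
      rw [this, Matrix.det_mul, Matrix.det_diagonal]
    simp only [hsub]
    rw [Finset.gcd_mul_left,
      Int.normalize_of_nonneg (Finset.prod_nonneg fun i _ => hd0 i)]
  have hDA' : detDivisor k m A' = ∏ i, d i := by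
    rw [hA', detDivisor_mul_left A U hU, hDA]
  have hprodne : (∏ i, d i) ≠ 0 := Finset.prod_ne_zero_iff.mpr fun i _ => hdne i
  have := hfac.symm.trans hDA'
  have := mul_left_cancel₀ hprodne (this.trans (mul_one _).symm)
  exact this
end

section
/- Let A = (A' | B) be a k×(k+m) integer matrix, where A' is a k×k integer matrix and B is a k×m integer matrix with m ≥ k, and let n be a positive integer such that the k-th determinantal divisor of B is coprime with n. Then for every choice of values x_1, ..., x_k ∈ ℤ/nℤ, the number of tuples (x_{k+1}, ..., x_{k+m}) ∈ (ℤ/nℤ)^m such that A·(x_1,...,x_{k+m})ᵀ = 0 in (ℤ/nℤ)^k is exactly n^{m-k}. -/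
theorem solution_count_with_coprime_determinantal
    (k m n : ℕ) (hkm : k ≤ m) (hn : 0 < n)
    (A' : Matrix (Fin k) (Fin k) ℤ) (B : Matrix (Fin k) (Fin m) ℤ)
    (hB : Int.gcd (detDivisor k m B) n = 1) :
    ∀ x : Fin k → ZMod n,
      Nat.card {y : Fin m → ZMod n //
        ∀ i : Fin k,
          (∑ j : Fin k, (A' i j : ZMod n) * x j) +
            (∑ j : Fin m, (B i j : ZMod n) * y j) = 0} = n ^ (m - k) := by
  intro x
  haveI : NeZero n := ⟨hn.ne'⟩
  classical
  set B' : Matrix (Fin k) (Fin m) (ZMod n) := B.map (Int.cast) with hB'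
  set φ : (Fin m → ZMod n) →ₗ[ZMod n] (Fin k → ZMod n) := Matrix.mulVecLin B' with hφ
  set S : Submodule (ZMod n) (Fin k → ZMod n) := LinearMap.range φ with hS
  -- the ideal of scalars a such that a • z is always in the range
  set I : Ideal (ZMod n) :=
    { carrier := {a | ∀ z : Fin k → ZMod n, a • z ∈ S}
      add_mem' := fun {a b} ha hb z => by
        simpa [add_smul] using S.add_mem (ha z) (hb z)
      zero_mem' := fun z => by simpa using S.zero_mem
      smul_mem' := fun r a ha z => by
        simpa [smul_eq_mul, mul_smul] using S.smul_mem r (ha z) } with hI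
  have memI : ∀ a : ZMod n, a ∈ I ↔ ∀ z : Fin k → ZMod n, a • z ∈ S := fun a => Iff.rfl
  -- each maximal minor (mod n) lies in I, via the adjugate
  have hdet : ∀ f : Fin k → Fin m, (((B.submatrix id f).det : ℤ) : ZMod n) ∈ I := by
    intro f
    rw [memI]
    intro z
    set M : Matrix (Fin k) (Fin k) (ZMod n) := B'.submatrix id f with hM
    set w : Fin k → ZMod n := M.adjugate.mulVec z with hw
    refine ⟨fun j => ∑ i, if f i = j then w i else 0, ?_⟩
    have key : B'.mulVec (fun j => ∑ i, if f i = j then w i else 0) = M.mulVec w := by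
      ext i
      simp only [Matrix.mulVec, dotProduct, Finset.mul_sum, mul_ite, mul_zero]
      rw [Finset.sum_comm]
      refine Finset.sum_congr rfl fun i' _ => ?_
      simp [hM, Matrix.submatrix_apply]
    have hMdet : M.det = (((B.submatrix id f).det : ℤ) : ZMod n) := by
      have : M = (B.submatrix id f).map (Int.castRingHom (ZMod n)) := by
        ext i j; simp [hM, hB', Matrix.submatrix_apply, Matrix.map_apply]
      rw [this]
      exact ((RingHom.map_det (Int.castRingHom (ZMod n)) (B.submatrix id f)).symm)
    show B'.mulVec _ = _
    rw [key, hw, Matrix.mulVec_mulVec, Matrix.mul_adjugate, hMdet,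
      Matrix.smul_mulVec, Matrix.one_mulVec]
  -- the gcd of the minors lies in I (Bézout, by induction on the finset)
  have hgcd : ∀ s : Finset (Fin k → Fin m),
      ((s.gcd (fun f => (B.submatrix id f).det) : ℤ) : ZMod n) ∈ I := by
    intro s
    induction s using Finset.induction with
    | empty => simpa using I.zero_mem
    | @insert a s hna ih =>
      rw [Finset.gcd_insert]
      set X : ℤ := (B.submatrix id a).det with hX
      set Y : ℤ := s.gcd (fun f => (B.submatrix id f).det) with hY
      have hbez : gcd X Y = X * Int.gcdA X Y + Y * Int.gcdB X Y := by
        rw [← Int.coe_gcd, Int.gcd_eq_gcd_ab]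
      rw [hbez]
      push_cast
      exact I.add_mem (I.mul_mem_right _ (hdet a)) (I.mul_mem_right _ ih)
  have hD : ((detDivisor k m B : ℤ) : ZMod n) ∈ I := hgcd Finset.univ
  -- coprimality makes 1 a member of I, hence φ is surjective
  have hcop : IsCoprime (detDivisor k m B) (n : ℤ) := Int.isCoprime_iff_gcd_eq_one.mpr hB
  obtain ⟨a, b, hab⟩ := hcop
  have h1 : (1 : ZMod n) ∈ I := by
    have h := congrArg (Int.cast : ℤ → ZMod n) hab
    push_cast at h
    rw [ZMod.natCast_self, mul_zero, add_zero] at h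
    rw [← h]
    exact I.mul_mem_left _ hD
  have hsurj : Function.Surjective φ := by
    intro z
    have := (memI 1).mp h1 z
    rw [one_smul] at this
    exact this
  -- counting: the solution set is a fiber of φ
  set c : Fin k → ZMod n := fun i => -∑ j : Fin k, (A' i j : ZMod n) * x j with hc
  have hcond : ∀ y : Fin m → ZMod n,
      (∀ i : Fin k,
        (∑ j : Fin k, (A' i j : ZMod n) * x j) +
          (∑ j : Fin m, (B i j : ZMod n) * y j) = 0) ↔ φ y = c := by
    intro y
    have hφy : ∀ i, φ y i = ∑ j : Fin m, (B i j : ZMod n) * y j := by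
      intro i
      simp [hφ, hB', Matrix.mulVecLin_apply, Matrix.mulVec, dotProduct,
        Matrix.map_apply]
    constructor
    · intro h
      funext i
      rw [hφy i, hc]
      have := h i
      linear_combination this
    · intro h i
      have := congrFun h i
      rw [hφy i, hc] at this
      rw [this]
      ring
  obtain ⟨y₀, hy₀⟩ := hsurj c
  -- fiber ≃ kernel
  let f : (Fin m → ZMod n) →+ (Fin k → ZMod n) := φ.toAddMonoidHom
  have hfs : Function.Surjective f := hsurj
  have e1 : {y : Fin m → ZMod n //
        ∀ i : Fin k,
          (∑ j : Fin k, (A' i j : ZMod n) * x j) +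
            (∑ j : Fin m, (B i j : ZMod n) * y j) = 0} ≃ f.ker := by
    refine Equiv.trans (Equiv.subtypeEquivRight hcond) ?_
    refine
      { toFun := fun y => ⟨y.1 - y₀, ?_⟩
        invFun := fun z => ⟨z.1 + y₀, ?_⟩
        left_inv := fun y => by ext1; simp
        right_inv := fun z => by ext1; simp }
    · have := y.2
      simp [AddMonoidHom.mem_ker, f, map_sub, this, hy₀]
    · have := z.2
      simp only [AddMonoidHom.mem_ker, f] at this
      have hz : φ z.1 = 0 := this
      show φ (z.1 + y₀) = c
      rw [map_add, hz, hy₀, zero_add]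
  have hcards : Nat.card f.ker * n ^ k = n ^ m := by
    have e2 := AddSubgroup.addGroupEquivQuotientProdAddSubgroup (s := f.ker)
    have e3 := QuotientAddGroup.quotientKerEquivOfSurjective f hfs
    have hG : Nat.card (Fin m → ZMod n) = n ^ m := by
      simp [Nat.card_pi, Nat.card_zmod]
    have hH : Nat.card (Fin k → ZMod n) = n ^ k := by
      simp [Nat.card_pi, Nat.card_zmod]
    have := Nat.card_congr e2
    rw [Nat.card_prod, Nat.card_congr e3.toEquiv, hG, hH] at this
    rw [mul_comm] at this
    exact this.symm
  have hk : n ^ m = n ^ (m - k) * n ^ k := by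
    rw [← pow_add, Nat.sub_add_cancel hkm]
  rw [Nat.card_congr e1]
  have hnk : 0 < n ^ k := Nat.pow_pos hn
  exact Nat.eq_of_mul_eq_mul_right hnk (by rw [hcards, hk])
end

section
/- Given a permutation σ ∈ S(n) (a bijection of {0,...,n-1}), define the loopless bicolored directed graph G_σ on vertex set {0,...,n-1} with a directed edge from i to j whenever σ(i) < σ(j), colored blue if i < j and red if i > j. Given τ ∈ S(t), if f : V(G_τ) → {x_0 < x_1 < ... < x_{t-1}} ⊆ {0,...,n-1} is any map such that for every directed edge (i → j) of G_τ of color c, (f(i) → f(j)) is a directed edge of color c of the subgraph of G_σ induced on {x_0,...,x_{t-1}}, then f(i) = x_i for all i ∈ {0,...,t-1}. -/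
/-- In the bicolored directed graph `G_σ` of a permutation `σ`, there is a directed
edge `i → j` iff `σ i < σ j`; it is colored blue iff `i < j` (red iff `i > j`).
Rigidity: any color- and direction-preserving homomorphism from `G_τ` into the
induced subgraph of `G_σ` on a strictly increasing set `x 0 < x 1 < ⋯ < x (t-1)`
is the map `i ↦ x i`. -/
theorem permutation_graph_homomorphism_rigidity
    (n t : ℕ) (σ : Equiv.Perm (Fin n)) (τ : Equiv.Perm (Fin t))
    (x : Fin t → Fin n) (hx : StrictMono x)
    (f : Fin t → Fin n) (hf : ∀ i, ∃ j, f i = x j)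
    (hhom : ∀ i j : Fin t, τ i < τ j →
      σ (f i) < σ (f j) ∧ ((i < j) ↔ (f i < f j))) :
    ∀ i, f i = x i := by
  choose g hg using hf
  have hmono : StrictMono g := by
    intro i j hij
    rcases lt_trichotomy (τ i) (τ j) with h | h | h
    · have h2 := ((hhom i j h).2).mp hij
      rw [hg, hg] at h2
      exact hx.lt_iff_lt.mp h2
    · exact absurd (τ.injective h) hij.ne
    · obtain ⟨h1, h2⟩ := hhom j i h
      have hne : g i ≠ g j := by
        intro he
        have : f i = f j := by rw [hg, hg, he]
        rw [this] at h1
        exact lt_irrefl _ h1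
      have hnlt : ¬ (f j < f i) := fun hlt => absurd (h2.mpr hlt) (not_lt.mpr hij.le)
      rw [hg, hg] at hnlt
      have hle : g i ≤ g j := by
        by_contra hc
        exact hnlt (hx (not_le.mp hc))
      exact lt_of_le_of_ne hle hne
  have hsurj : Function.Surjective g :=
    Finite.surjective_of_injective hmono.injective
  have hid : ∀ i, g i = i := by
    let e := StrictMono.orderIsoOfSurjective g hmono hsurj
    have he : e = OrderIso.refl (Fin t) := Subsingleton.elim _ _
    intro i
    have := congrArg (fun o => (o : Fin t ≃o Fin t) i) he
    simpa [e, StrictMono.coe_orderIsoOfSurjective] using this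
  intro i
  rw [hg, hid]
end

section
/- Let A be a k×m integer matrix with m ≥ k, let G be a finite abelian group, and let d_1,...,d_k be the diagonal entries of the Smith normal form of A. Let A'' be the k×m integer matrix with k-th determinantal divisor 1 obtained by row-reducing A to A' (so gcd of row j of A' is d_j) and dividing the j-th row of A' by d_j. Then the solution set {x ∈ G^m : A·x = 0} equals the union over all b ∈ ∏_{i=1}^k P_{d_i}(G) of the solution sets {x ∈ G^m : A''·x = b}, where P_d(G) = {g ∈ G : d·g = 0} is the d-torsion subgroup of G. -/
/-- Action of an integer matrix on tuples of elements of an additive group. -/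
def intMulVec {k m : ℕ} {G : Type} [AddCommGroup G]
    (A : Matrix (Fin k) (Fin m) ℤ) (x : Fin m → G) : Fin k → G :=
  fun i => ∑ j : Fin m, A i j • x j

lemma intMulVec_mul {k m : ℕ} {G : Type} [AddCommGroup G]
    (B : Matrix (Fin k) (Fin k) ℤ) (A : Matrix (Fin k) (Fin m) ℤ) (x : Fin m → G) :
    intMulVec (B * A) x = fun i => ∑ l, B i l • intMulVec A x l := by
  funext i
  simp only [intMulVec, Matrix.mul_apply, Finset.sum_smul, Finset.smul_sum, mul_smul]
  exact Finset.sum_comm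

theorem solution_set_as_union_over_torsion_vectors
    (k m : ℕ) (hkm : k ≤ m) (G : Type) [AddCommGroup G] [Fintype G]
    (A : Matrix (Fin k) (Fin m) ℤ) (d : Fin k → ℤ)
    -- `d` is the diagonal of the Smith normal form of `A`, with nonzero entries:
    (U₀ : Matrix (Fin k) (Fin k) ℤ) (V₀ : Matrix (Fin m) (Fin m) ℤ)
    (hU₀ : IsUnit U₀.det) (hV₀ : IsUnit V₀.det)
    (hd0 : ∀ i, 0 ≤ d i) (hdne : ∀ i, d i ≠ 0)
    (hchain : ∀ i j : Fin k, i ≤ j → d i ∣ d j)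
    (hSNF : U₀ * A * V₀ = Matrix.of fun (i : Fin k) (j : Fin m) =>
      if (j : ℕ) = (i : ℕ) then d i else 0)
    -- `A'` is a row reduction of `A` whose `j`-th row has gcd `d j`:
    (U : Matrix (Fin k) (Fin k) ℤ) (hU : IsUnit U.det)
    (A' : Matrix (Fin k) (Fin m) ℤ) (hA' : A' = U * A)
    (hrow : ∀ j : Fin k, Finset.univ.gcd (fun i : Fin m => A' j i) = d j)
    -- `A''` is obtained from `A'` by dividing the `j`-th row by `d j`,
    -- and has `k`-th determinantal divisor `1`:
    (A'' : Matrix (Fin k) (Fin m) ℤ)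
    (hA'' : ∀ (j : Fin k) (i : Fin m), A' j i = d j * A'' j i)
    (hdet : detDivisor k m A'' = 1) :
    {x : Fin m → G | intMulVec A x = 0} =
      ⋃ b ∈ {b : Fin k → G | ∀ i : Fin k, d i • b i = 0},
        {x : Fin m → G | intMulVec A'' x = b} := by
  haveI := U.invertibleOfIsUnitDet hU
  have hAeq : A = ⅟U * A' := by
    rw [hA', ← Matrix.mul_assoc, invOf_mul_self, Matrix.one_mul]
  have hA'x : ∀ x : Fin m → G, intMulVec A' x = fun i => d i • intMulVec A'' x i := by
    intro x
    funext i
    simp only [intMulVec, Finset.smul_sum]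
    refine Finset.sum_congr rfl fun j _ => ?_
    rw [hA'' i j, mul_smul]
  ext x
  simp only [Set.mem_setOf_eq, Set.mem_iUnion, Set.mem_setOf_eq]
  constructor
  · intro h
    refine ⟨intMulVec A'' x, fun i => ?_, rfl⟩
    have h' : intMulVec A' x = 0 := by
      rw [hA', intMulVec_mul, h]
      funext i; simp
    have := congrFun h' i
    rw [hA'x x] at this
    simpa using this
  · rintro ⟨b, hb, rfl⟩
    have h' : intMulVec A' x = 0 := by
      rw [hA'x x]; funext i; simp [hb i]
    rw [hAeq, intMulVec_mul, h']
    funext i; simp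
end

section
/- Let n ≥ 2 be an integer, and let A = (I_{k} | B) be a k×m integer matrix in standard form (m > k) such that every square matrix formed by k cyclically-consecutive columns of A has determinant coprime with n. Then any solution x ∈ (ℤ/nℤ)^m of A·x = 0 is uniquely determined by any m−k cyclically consecutive coordinates: if x, y ∈ (ℤ/nℤ)^m both satisfy A·x = 0 = A·y and x_j = y_j for j in some set of m−k cyclically consecutive indices modulo m, then x = y. -/
theorem aux_isUnit_intCast_of_gcd {n : ℕ} {d : ℤ} (h : Int.gcd d n = 1) :
    IsUnit ((d : ZMod n)) := by
  have h1 : Nat.Coprime d.natAbs n := h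
  have h2 : IsUnit ((d.natAbs : ZMod n)) := (ZMod.isUnit_iff_coprime _ _).mpr h1
  rcases Int.natAbs_eq d with he | he
  · rw [he, Int.cast_natCast]; exact h2
  · rw [he, Int.cast_neg, Int.cast_natCast]; exact h2.neg

/-- For a standard-form `n`-circular matrix `A = (I_k | B)`, a solution of
`A · x = 0` over `ℤ/nℤ` is determined by any `m − k` cyclically consecutive
coordinates. -/
theorem circular_system_determined_by_consecutive_coordinates
    (n k m : ℕ) (hn : 2 ≤ n) (hkm : k < m)
    (A : Matrix (Fin k) (Fin m) ℤ)
    -- `A` is in standard form `(I_k | B)`: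
    (hstd : ∀ (i : Fin k) (j : Fin m), j.val < k →
      A i j = if i.val = j.val then 1 else 0)
    -- `n`-circularity: every `k` cyclically consecutive columns of `A` form a
    -- square matrix with determinant coprime with `n`:
    (hcirc : ∀ i : Fin m,
      Int.gcd
        (Matrix.det (Matrix.of fun a b : Fin k =>
          A a ⟨(i.val + b.val) % m, Nat.mod_lt _ (Nat.lt_of_le_of_lt (Nat.zero_le _) hkm)⟩)) n = 1) :
    ∀ x y : Fin m → ZMod n,
      Matrix.mulVec (A.map (Int.cast : ℤ → ZMod n)) x = 0 →
      Matrix.mulVec (A.map (Int.cast : ℤ → ZMod n)) y = 0 →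
      ∀ i : Fin m,
        (∀ a : ℕ, a < m - k →
          x ⟨(i.val + a) % m, Nat.mod_lt _ (Nat.lt_of_le_of_lt (Nat.zero_le _) hkm)⟩ =
          y ⟨(i.val + a) % m, Nat.mod_lt _ (Nat.lt_of_le_of_lt (Nat.zero_le _) hkm)⟩) →
        x = y := by
  intro x y hx hy i hxy
  have hm : 0 < m := Nat.lt_of_le_of_lt (Nat.zero_le _) hkm
  haveI : NeZero m := ⟨hm.ne'⟩
  set z : Fin m → ZMod n := x - y with hzdef
  have hz : Matrix.mulVec (A.map (Int.cast : ℤ → ZMod n)) z = 0 := by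
    rw [hzdef, Matrix.mulVec_sub, hx, hy, sub_zero]
  suffices hzz : z = 0 by
    funext j
    have := congrFun hzz j
    simpa [hzdef, sub_eq_zero] using this
  have hz0 : ∀ a : ℕ, a < m - k →
      z ⟨(i.val + a) % m, Nat.mod_lt _ hm⟩ = 0 := by
    intro a ha
    simp only [hzdef, Pi.sub_apply, sub_eq_zero]
    exact hxy a ha
  set i' : Fin m := ⟨(i.val + (m - k)) % m, Nat.mod_lt _ hm⟩ with hi'
  set S : Matrix (Fin k) (Fin k) ℤ :=
    Matrix.of fun a b : Fin k => A a ⟨(i'.val + b.val) % m, Nat.mod_lt _ hm⟩ with hS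
  set M : Matrix (Fin k) (Fin k) (ZMod n) := S.map (Int.cast : ℤ → ZMod n) with hM
  have hMdet : IsUnit M.det := by
    have : M.det = ((S.det : ℤ) : ZMod n) := by
      rw [hM]
      exact (RingHom.map_det (Int.castRingHom (ZMod n)) S).symm
    rw [this]
    apply aux_isUnit_intCast_of_gcd
    have := hcirc i'
    convert this using 3
  set w : Fin k → ZMod n := fun b => z ⟨(i'.val + b.val) % m, Nat.mod_lt _ hm⟩ with hw
  have hMw : M.mulVec w = 0 := by
    funext a
    have h0 := congrFun hz a
    simp only [Matrix.mulVec, dotProduct, Matrix.map_apply, Pi.zero_apply] at h0 ⊢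
    set f : Fin m → ZMod n := fun j => ((A a j : ℤ) : ZMod n) * z j with hf
    have h1 : ∑ t : Fin m, f (i + t) = 0 := by
      exact (Fintype.sum_equiv (Equiv.addLeft i) (fun t => f (i + t)) f
        (fun t => rfl)).trans h0
    set e : Fin k → Fin m := fun b => ⟨m - k + b.val, by omega⟩ with he
    have hinj : Function.Injective e := by
      intro b c hbc
      have : m - k + b.val = m - k + c.val := congrArg Fin.val hbc
      exact Fin.ext (by omega)
    have h2 : ∑ t : Fin m, f (i + t) = ∑ b : Fin k, f (i + e b) := by
      rw [← Finset.sum_image (f := fun t => f (i + t))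
        (g := e) (by intro b _ c _ hbc; exact hinj hbc)]
      symm
      apply Finset.sum_subset (Finset.subset_univ _)
      intro t _ ht
      have htlt : t.val < m - k := by
        by_contra hc
        push_neg at hc
        apply ht
        refine Finset.mem_image.mpr ⟨⟨t.val - (m - k), by omega⟩, Finset.mem_univ _, ?_⟩
        exact Fin.ext (by simp only [he]; omega)
      have hzit : z (i + t) = 0 := by
        have h5 := hz0 t.val htlt
        have heq : (⟨(i.val + t.val) % m, Nat.mod_lt _ hm⟩ : Fin m) = i + t :=
          Fin.ext (Fin.val_add _ _).symm
        rwa [heq] at h5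
      simp [hf, hzit]
    have h3 : ∀ b : Fin k, f (i + e b) = ((S a b : ℤ) : ZMod n) * w b := by
      intro b
      have hval : (i + e b).val = (i'.val + b.val) % m := by
        have hv : i'.val = (i.val + (m - k)) % m := rfl
        have hv2 : (e b).val = m - k + b.val := rfl
        rw [Fin.val_add, hv2, hv, Nat.mod_add_mod, ← Nat.add_assoc]
      have : i + e b = (⟨(i'.val + b.val) % m, Nat.mod_lt _ hm⟩ : Fin m) := Fin.ext hval
      rw [hf, this]
      rfl
    have : ∑ b : Fin k, ((S a b : ℤ) : ZMod n) * w b = 0 := by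
      rw [← h1, h2]
      exact Finset.sum_congr rfl fun b _ => (h3 b).symm
    exact this
  have hw0 : w = 0 := by
    have h4 : M⁻¹.mulVec (M.mulVec w) = w := by
      rw [Matrix.mulVec_mulVec, Matrix.nonsing_inv_mul M hMdet, Matrix.one_mulVec]
    rw [hMw] at h4
    rw [← h4, Matrix.mulVec_zero]
  funext j
  set t : Fin m := j - i with ht
  have hjt : j = i + t := by rw [ht]; abel
  by_cases hlt : t.val < m - k
  · have h5 := hz0 t.val hlt
    have heq : (⟨(i.val + t.val) % m, Nat.mod_lt _ hm⟩ : Fin m) = i + t :=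
      Fin.ext (Fin.val_add _ _).symm
    rw [hjt, ← heq]
    exact h5
  · push_neg at hlt
    have hb : t.val - (m - k) < k := by have := t.isLt; omega
    have h5 := congrFun hw0 ⟨t.val - (m - k), hb⟩
    simp only [hw, Pi.zero_apply] at h5
    have heq : (⟨(i'.val + (t.val - (m - k))) % m, Nat.mod_lt _ hm⟩ : Fin m) = i + t := by
      refine Fin.ext ?_
      have hv : i'.val = (i.val + (m - k)) % m := rfl
      show (i'.val + (t.val - (m - k))) % m = (i + t).val
      rw [Fin.val_add, hv, Nat.mod_add_mod]
      congr 1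
      omega
    rw [hjt, ← heq]
    exact h5
end
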